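/- Fix λ ∈ ℂ, integers α_1 > α_2 > ⋯ > α_N ≥ 1 and m_1, …, m_N ≥ 1, set n := Σ_r α_r m_r and S := ⊕_{r=1}^N ⊕_{j=1}^{m_r} K_{α_r}(λ). Then the complex vector space {X ∈ ℂ^{n×n} : Xᵀ = −X and XS = SX} of skew-symmetric matrices commuting with S has dimension Σ_{r=1}^N α_r · ( m_r(m_r−1)/2 + m_r·Σ_{s=1}^{r−1} m_s ). -/

import Mathlib

open Matrix

noncomputable section

/-- Form (0T0): block matrix partitioned by Jordan structure `(α, m)` whose `(r,s)` block,
viewed as an `α r × α s` array of `m r × m s` blocks, is a rectangular block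
upper-triangular Toeplitz matrix aligned to the top-right corner. -/
def IsForm0T0 {N : ℕ} (α m : Fin N → ℕ)
    (X : Matrix (Σ r : Fin N, Fin (α r) × Fin (m r)) (Σ r : Fin N, Fin (α r) × Fin (m r)) ℂ) :
    Prop :=
  ∃ A : ∀ r s : Fin N, ℕ → Matrix (Fin (m r)) (Fin (m s)) ℂ,
    ∀ (r s : Fin N) (i : Fin (α r)) (j : Fin (α s)) (a : Fin (m r)) (b : Fin (m s)),
      X ⟨r, (i, a)⟩ ⟨s, (j, b)⟩ =
        if (i : ℕ) + (α s - min (α r) (α s)) ≤ (j : ℕ) then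
          A r s ((j : ℕ) - (i : ℕ) - (α s - min (α r) (α s))) a b
        else 0

/-- `E_b(I_m)`: the `bm × bm` block matrix with `I_m` on the block anti-diagonal. -/
def revE (b m : ℕ) : Matrix (Fin b × Fin m) (Fin b × Fin m) ℂ :=
  Matrix.of fun p q => if (p.1 : ℕ) + (q.1 : ℕ) + 1 = b ∧ p.2 = q.2 then 1 else 0

/-- `F = ⊕_r E_{α r}(I_{m r})`. -/
def bigF {N : ℕ} (α m : Fin N → ℕ) :
    Matrix (Σ r : Fin N, Fin (α r) × Fin (m r)) (Σ r : Fin N, Fin (α r) × Fin (m r)) ℂ :=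
  Matrix.blockDiagonal' fun r => revE (α r) (m r)

/-- The `n × n` upper-triangular Jordan block `J_n(λ)`. -/
def Jmat (n : ℕ) (lam : ℂ) : Matrix (Fin n) (Fin n) ℂ :=
  Matrix.of fun i j => if (j : ℕ) = (i : ℕ) then lam else if (j : ℕ) = (i : ℕ) + 1 then 1 else 0

/-- The `n × n` backward identity matrix `E_n`. -/
def ErevC (n : ℕ) : Matrix (Fin n) (Fin n) ℂ :=
  Matrix.of fun i j => if (i : ℕ) + (j : ℕ) + 1 = n then 1 else 0

/-- `P_n = (1/√2)(I + i E_n)`. -/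
noncomputable def Pmat (n : ℕ) : Matrix (Fin n) (Fin n) ℂ :=
  (Real.sqrt 2 : ℂ)⁻¹ • (1 + Complex.I • ErevC n)

/-- `P_n⁻¹ = (1/√2)(I − i E_n)`. -/
noncomputable def PmatInv (n : ℕ) : Matrix (Fin n) (Fin n) ℂ :=
  (Real.sqrt 2 : ℂ)⁻¹ • (1 - Complex.I • ErevC n)

/-- The symmetric canonical form `K_n(λ) = P_n J_n(λ) P_n⁻¹` of a Jordan block. -/
noncomputable def Kmat (n : ℕ) (lam : ℂ) : Matrix (Fin n) (Fin n) ℂ :=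
  Pmat n * Jmat n lam * PmatInv n

/-- `T(A_0, …)`: the `β × β` block upper-triangular Toeplitz matrix with blocks `A_j`. -/
def blkToeplitz (β p q : ℕ) (A : ℕ → Matrix (Fin p) (Fin q) ℂ) :
    Matrix (Fin β × Fin p) (Fin β × Fin q) ℂ :=
  Matrix.of fun x y =>
    if (x.1 : ℕ) ≤ (y.1 : ℕ) then A ((y.1 : ℕ) - (x.1 : ℕ)) x.2 y.2 else 0

/-- The `(i,i)`-th `m r × m r` entry-block of the `(r,r)` diagonal block of `X`; for a
matrix of form (0T0) this is the leading Toeplitz coefficient `A^{rr}_0`. -/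
def diagLead {N : ℕ} (α m : Fin N → ℕ)
    (X : Matrix (Σ r : Fin N, Fin (α r) × Fin (m r)) (Σ r : Fin N, Fin (α r) × Fin (m r)) ℂ)
    (r : Fin N) (i : Fin (α r)) : Matrix (Fin (m r)) (Fin (m r)) ℂ :=
  Matrix.of fun a b => X ⟨r, (i, a)⟩ ⟨r, (i, b)⟩

/-- The space of skew-symmetric matrices commuting with `S`. -/
def skewCommSubmodule (ι : Type*) [Fintype ι] [DecidableEq ι] (S : Matrix ι ι ℂ) :
    Submodule ℂ (Matrix ι ι ℂ) where
  carrier := {X | Xᵀ = -X ∧ X * S = S * X}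
  add_mem' := by
    rintro a b ⟨ha1, ha2⟩ ⟨hb1, hb2⟩
    refine ⟨?_, ?_⟩
    · rw [Matrix.transpose_add, ha1, hb1, neg_add]
    · rw [add_mul, mul_add, ha2, hb2]
  zero_mem' := by
    refine ⟨?_, ?_⟩
    · simp
    · simp
  smul_mem' := by
    rintro c a ⟨h1, h2⟩
    refine ⟨?_, ?_⟩
    · rw [Matrix.transpose_smul, h1, smul_neg]
    · rw [Matrix.smul_mul, Matrix.mul_smul, h2]

/-- The isotropy group (as a set) of `S` under orthogonal similarity. -/
def sigmaSet {ι : Type*} [Fintype ι] [DecidableEq ι] (S : Matrix ι ι ℂ) : Set (Matrix ι ι ℂ) :=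
  {Q | Qᵀ * Q = 1 ∧ Qᵀ * S * Q = S}

lemma ErevC_eq (n : ℕ) : ErevC n = (1 : Matrix (Fin n) (Fin n) ℂ).submatrix id ⇑(Fin.revPerm) := by
  ext i j
  have hi := i.isLt; have hj := j.isLt
  simp only [ErevC, of_apply, submatrix_apply, id_eq, Fin.revPerm_apply, one_apply, Fin.ext_iff,
    Fin.val_rev]
  rcases eq_or_ne ((i:ℕ) + (j:ℕ) + 1) n with h' | h'
  · rw [if_pos h', if_pos (by omega)]
  · rw [if_neg h', if_neg (by omega)]

lemma ErevC_eq' (n : ℕ) : ErevC n = (1 : Matrix (Fin n) (Fin n) ℂ).submatrix ⇑(Fin.revPerm) id := by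
  ext i j
  have hi := i.isLt; have hj := j.isLt
  simp only [ErevC, of_apply, submatrix_apply, id_eq, Fin.revPerm_apply, one_apply, Fin.ext_iff,
    Fin.val_rev]
  rcases eq_or_ne ((i:ℕ) + (j:ℕ) + 1) n with h' | h'
  · rw [if_pos h', if_pos (by omega)]
  · rw [if_neg h', if_neg (by omega)]

lemma ErevC_mul_self (n : ℕ) : ErevC n * ErevC n = 1 := by
  nth_rewrite 2 [ErevC_eq' n]
  nth_rewrite 1 [ErevC_eq n]
  rw [Matrix.submatrix_mul_equiv, one_mul, submatrix_id_id]

lemma ErevC_transpose (n : ℕ) : (ErevC n)ᵀ = ErevC n := by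
  ext i j; simp only [transpose_apply, ErevC, of_apply]
  congr 1; simp only [eq_iff_iff]; omega

lemma sqrt2_mul_self : ((Real.sqrt 2 : ℝ) : ℂ) * ((Real.sqrt 2 : ℝ) : ℂ) = 2 := by
  norm_cast
  rw [Real.mul_self_sqrt] <;> norm_num

lemma quadP {n : ℕ} (x y : ℂ) :
    ((Real.sqrt 2:ℂ)⁻¹ • (1 + x • ErevC n)) * ((Real.sqrt 2:ℂ)⁻¹ • (1 + y • ErevC n))
      = (2:ℂ)⁻¹ • ((1 + x*y) • (1 : Matrix (Fin n) (Fin n) ℂ) + (x+y) • ErevC n) := by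
  rw [Matrix.smul_mul, Matrix.mul_smul, smul_smul, ← mul_inv, sqrt2_mul_self]
  congr 1
  simp only [mul_add, add_mul, one_mul, mul_one, smul_mul_smul_comm, ErevC_mul_self]
  module

lemma PmatInv_eq (n : ℕ) :
    PmatInv n = (Real.sqrt 2 : ℂ)⁻¹ • (1 + (-Complex.I) • ErevC n) := by
  rw [PmatInv, sub_eq_add_neg, neg_smul]

lemma Pmat_mul_PmatInv (n : ℕ) : Pmat n * PmatInv n = 1 := by
  rw [Pmat, PmatInv_eq, quadP]
  simp [Complex.I_mul_I, smul_smul]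
  norm_num

lemma PmatInv_mul_Pmat (n : ℕ) : PmatInv n * Pmat n = 1 := by
  rw [Pmat, PmatInv_eq, quadP]
  simp [Complex.I_mul_I, smul_smul]
  norm_num

lemma Pmat_sq (n : ℕ) : Pmat n * Pmat n = Complex.I • ErevC n := by
  rw [Pmat, quadP]
  simp only [Complex.I_mul_I, smul_smul]
  norm_num
  module

lemma PmatInv_sq (n : ℕ) : PmatInv n * PmatInv n = (-Complex.I) • ErevC n := by
  rw [PmatInv_eq, quadP]
  have h1 : -Complex.I * -Complex.I = -1 := by
    simp [Complex.I_mul_I]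
  rw [h1]
  norm_num
  module

lemma Pmat_transpose (n : ℕ) : (Pmat n)ᵀ = Pmat n := by
  rw [Pmat, transpose_smul, transpose_add, transpose_one, transpose_smul, ErevC_transpose]

lemma PmatInv_transpose (n : ℕ) : (PmatInv n)ᵀ = PmatInv n := by
  rw [PmatInv, transpose_smul, transpose_sub, transpose_one, transpose_smul, ErevC_transpose]

lemma Jmat_eq (n : ℕ) (lam : ℂ) : Jmat n lam = lam • 1 + Jmat n 0 := by
  ext i j
  rcases eq_or_ne ((j:ℕ)) ((i:ℕ)) with h | h
  · have hij : i = j := Fin.ext h.symm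
    subst hij
    simp [Jmat, one_apply]
  · have hij : i ≠ j := fun hh => h (by rw [hh])
    simp [Jmat, one_apply, h, hij]


lemma blockDiagonal_const_one {o n : Type*} [DecidableEq o] [Fintype o] [DecidableEq n] [Fintype n] :
    (blockDiagonal fun _ : o => (1 : Matrix n n ℂ)) = 1 := by
  rw [show (fun _ : o => (1 : Matrix n n ℂ)) = 1 from rfl, blockDiagonal_one]

lemma blockDiagonal'_const_one {o : Type*} [DecidableEq o] [Fintype o] {m' : o → Type*}
    [∀ i, DecidableEq (m' i)] [∀ i, Fintype (m' i)] :
    (blockDiagonal' fun k : o => (1 : Matrix (m' k) (m' k) ℂ)) = 1 := by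
  rw [show (fun k : o => (1 : Matrix (m' k) (m' k) ℂ)) = 1 from rfl, blockDiagonal'_one]

lemma blockDiagonal'_smul' {o : Type*} [DecidableEq o] {m' : o → Type*}
    (c : ℂ) (f : ∀ i : o, Matrix (m' i) (m' i) ℂ) :
    (blockDiagonal' fun k => c • f k) = c • blockDiagonal' f := by
  rw [show (fun k => c • f k) = c • f from rfl, blockDiagonal'_smul]

section blocks

variable {N : ℕ} (α m : Fin N → ℕ) (lam : ℂ)

abbrev BIdx (α m : Fin N → ℕ) := Σ r : Fin N, Fin (α r) × Fin (m r)

def calP : Matrix (BIdx α m) (BIdx α m) ℂ :=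
  blockDiagonal' fun r => blockDiagonal fun _ : Fin (m r) => Pmat (α r)

def calQ : Matrix (BIdx α m) (BIdx α m) ℂ :=
  blockDiagonal' fun r => blockDiagonal fun _ : Fin (m r) => PmatInv (α r)

def calN : Matrix (BIdx α m) (BIdx α m) ℂ :=
  blockDiagonal' fun r => blockDiagonal fun _ : Fin (m r) => Jmat (α r) 0

def calS : Matrix (BIdx α m) (BIdx α m) ℂ :=
  blockDiagonal' fun r => blockDiagonal fun _ : Fin (m r) => Kmat (α r) lam

def calJ : Matrix (BIdx α m) (BIdx α m) ℂ :=
  blockDiagonal' fun r => blockDiagonal fun _ : Fin (m r) => Jmat (α r) lam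

lemma revE_eq (b mm : ℕ) : revE b mm = blockDiagonal fun _ : Fin mm => ErevC b := by
  ext ⟨i, p⟩ ⟨j, q⟩
  simp only [revE, of_apply, blockDiagonal_apply, ErevC]
  by_cases h : p = q
  · simp [h]
  · simp [h]

lemma bigF_eq : bigF α m = blockDiagonal' fun r => blockDiagonal fun _ : Fin (m r) => ErevC (α r) := by
  unfold bigF
  rw [show (fun r => revE (α r) (m r))
    = fun r => blockDiagonal fun _ : Fin (m r) => ErevC (α r) from funext fun r => revE_eq _ _]

lemma calP_mul_calQ : calP α m * calQ α m = 1 := by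
  rw [calP, calQ, ← blockDiagonal'_mul]
  simp only [← blockDiagonal_mul, Pmat_mul_PmatInv, blockDiagonal_const_one, blockDiagonal'_const_one]

lemma calQ_mul_calP : calQ α m * calP α m = 1 := by
  rw [calP, calQ, ← blockDiagonal'_mul]
  simp only [← blockDiagonal_mul, PmatInv_mul_Pmat, blockDiagonal_const_one, blockDiagonal'_const_one]

lemma calS_eq : calS α m lam = calP α m * calJ α m lam * calQ α m := by
  rw [calP, calQ, calJ, ← blockDiagonal'_mul, ← blockDiagonal'_mul, calS]
  simp only [← blockDiagonal_mul]
  rfl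

lemma calJ_eq : calJ α m lam = lam • 1 + calN α m := by
  rw [calJ, calN]
  have h1 : (fun r => blockDiagonal fun _ : Fin (m r) => Jmat (α r) lam)
      = fun r => lam • (blockDiagonal fun _ : Fin (m r) => (1 : Matrix (Fin (α r)) (Fin (α r)) ℂ))
        + blockDiagonal fun _ : Fin (m r) => Jmat (α r) 0 := by
    funext r
    rw [← blockDiagonal_smul, ← blockDiagonal_add]
    congr 1
    exact funext fun _ => Jmat_eq _ _
  rw [h1]
  have h2 : (fun r => lam • (blockDiagonal fun _ : Fin (m r) => (1 : Matrix (Fin (α r)) (Fin (α r)) ℂ))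
        + blockDiagonal fun _ : Fin (m r) => Jmat (α r) 0)
      = (fun r => lam • (blockDiagonal fun _ : Fin (m r) => (1 : Matrix (Fin (α r)) (Fin (α r)) ℂ)))
        + fun r => blockDiagonal fun _ : Fin (m r) => Jmat (α r) 0 := rfl
  rw [h2, blockDiagonal'_add, blockDiagonal'_smul']
  simp only [blockDiagonal_const_one, blockDiagonal'_const_one]

lemma calP_sq : calP α m * calP α m = Complex.I • bigF α m := by
  rw [calP, ← blockDiagonal'_mul, bigF_eq, ← blockDiagonal'_smul']
  refine congrArg blockDiagonal' (funext fun k => ?_)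
  rw [← blockDiagonal_mul, ← blockDiagonal_smul]
  exact congrArg blockDiagonal (funext fun _ => Pmat_sq _)

lemma calQ_sq : calQ α m * calQ α m = (-Complex.I) • bigF α m := by
  rw [calQ, ← blockDiagonal'_mul, bigF_eq, ← blockDiagonal'_smul']
  refine congrArg blockDiagonal' (funext fun k => ?_)
  rw [← blockDiagonal_mul, ← blockDiagonal_smul]
  exact congrArg blockDiagonal (funext fun _ => PmatInv_sq _)

lemma calP_transpose : (calP α m)ᵀ = calP α m := by
  rw [calP, blockDiagonal'_transpose]
  simp only [blockDiagonal_transpose, Pmat_transpose]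

lemma calQ_transpose : (calQ α m)ᵀ = calQ α m := by
  rw [calQ, blockDiagonal'_transpose]
  simp only [blockDiagonal_transpose, PmatInv_transpose]

lemma bigF_mul_self : bigF α m * bigF α m = 1 := by
  rw [bigF_eq, ← blockDiagonal'_mul]
  simp only [← blockDiagonal_mul, ErevC_mul_self, blockDiagonal_const_one, blockDiagonal'_const_one]

lemma bigF_transpose : (bigF α m)ᵀ = bigF α m := by
  rw [bigF_eq, blockDiagonal'_transpose]
  simp only [blockDiagonal_transpose, ErevC_transpose]

end blocks

section reduction

variable {N : ℕ} (α m : Fin N → ℕ) (lam : ℂ)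

/-- The `Y`-side submodule: commutes with the nilpotent part and `Yᵀ = -(F Y F)`. -/
def Msub : Submodule ℂ (Matrix (BIdx α m) (BIdx α m) ℂ) where
  carrier := {Y | Y * calN α m = calN α m * Y ∧ Yᵀ = -(bigF α m * Y * bigF α m)}
  add_mem' := by
    rintro a b ⟨ha1, ha2⟩ ⟨hb1, hb2⟩
    refine ⟨?_, ?_⟩
    · rw [add_mul, mul_add, ha1, hb1]
    · rw [Matrix.transpose_add, ha2, hb2, Matrix.mul_add, Matrix.add_mul, neg_add]
  zero_mem' := ⟨by simp, by simp⟩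
  smul_mem' := by
    rintro c a ⟨h1, h2⟩
    refine ⟨?_, ?_⟩
    · rw [Matrix.smul_mul, Matrix.mul_smul, h1]
    · rw [Matrix.transpose_smul, h2]
      simp [Matrix.mul_smul, Matrix.smul_mul]

/-- Conjugation `X ↦ Q X P` as a linear equivalence. -/
def conjE : Matrix (BIdx α m) (BIdx α m) ℂ ≃ₗ[ℂ] Matrix (BIdx α m) (BIdx α m) ℂ where
  toFun X := calQ α m * X * calP α m
  invFun Y := calP α m * Y * calQ α m
  map_add' X₁ X₂ := by simp [Matrix.mul_add, Matrix.add_mul]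
  map_smul' c X := by simp [Matrix.mul_smul, Matrix.smul_mul]
  left_inv X := by
    show calP α m * (calQ α m * X * calP α m) * calQ α m = X
    rw [show calP α m * (calQ α m * X * calP α m) * calQ α m
        = (calP α m * calQ α m) * X * (calP α m * calQ α m) from by simp only [Matrix.mul_assoc],
      calP_mul_calQ, Matrix.one_mul, Matrix.mul_one]
  right_inv Y := by
    show calQ α m * (calP α m * Y * calQ α m) * calP α m = Y
    rw [show calQ α m * (calP α m * Y * calQ α m) * calP α m
        = (calQ α m * calP α m) * Y * (calQ α m * calP α m) from by simp only [Matrix.mul_assoc],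
      calQ_mul_calP, Matrix.one_mul, Matrix.mul_one]

lemma mul_conjQ (X A : Matrix (BIdx α m) (BIdx α m) ℂ) :
    (calQ α m * X * calP α m) * (calQ α m * A * calP α m) = calQ α m * (X * A) * calP α m := by
  have h : calQ α m * X * calP α m * (calQ α m * A * calP α m)
      = calQ α m * X * ((calP α m * calQ α m) * A) * calP α m := by
    simp only [Matrix.mul_assoc]
  rw [h, calP_mul_calQ, Matrix.one_mul]
  simp only [Matrix.mul_assoc]

lemma mul_conjP (X A : Matrix (BIdx α m) (BIdx α m) ℂ) :
    (calP α m * X * calQ α m) * (calP α m * A * calQ α m) = calP α m * (X * A) * calQ α m := by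
  have h : calP α m * X * calQ α m * (calP α m * A * calQ α m)
      = calP α m * X * ((calQ α m * calP α m) * A) * calQ α m := by
    simp only [Matrix.mul_assoc]
  rw [h, calQ_mul_calP, Matrix.one_mul]
  simp only [Matrix.mul_assoc]

lemma calJ_as_conj : calJ α m lam = calQ α m * calS α m lam * calP α m := by
  rw [calS_eq]
  have h : calQ α m * (calP α m * calJ α m lam * calQ α m) * calP α m
      = (calQ α m * calP α m) * calJ α m lam * (calQ α m * calP α m) := by
    simp only [Matrix.mul_assoc]
  rw [h, calQ_mul_calP, Matrix.one_mul, Matrix.mul_one]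

lemma bigF_mul_calQ : bigF α m * calQ α m = (-Complex.I) • calP α m := by
  have h : bigF α m = (-Complex.I) • (calP α m * calP α m) := by
    rw [calP_sq, smul_smul]; simp
  rw [h, Matrix.smul_mul, Matrix.mul_assoc, calP_mul_calQ, Matrix.mul_one]

lemma calQ_mul_bigF : calQ α m * bigF α m = (-Complex.I) • calP α m := by
  have h : bigF α m = (-Complex.I) • (calP α m * calP α m) := by
    rw [calP_sq, smul_smul]; simp
  rw [h, Matrix.mul_smul, ← Matrix.mul_assoc, calQ_mul_calP, Matrix.one_mul]

lemma bigF_mul_calP : bigF α m * calP α m = Complex.I • calQ α m := by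
  have h : bigF α m = Complex.I • (calQ α m * calQ α m) := by
    rw [calQ_sq, smul_smul]; simp
  rw [h, Matrix.smul_mul, Matrix.mul_assoc, calQ_mul_calP, Matrix.mul_one]

lemma calP_mul_bigF : calP α m * bigF α m = Complex.I • calQ α m := by
  have h : bigF α m = Complex.I • (calQ α m * calQ α m) := by
    rw [calQ_sq, smul_smul]; simp
  rw [h, Matrix.mul_smul, ← Matrix.mul_assoc, calP_mul_calQ, Matrix.one_mul]

lemma map_skewComm :
    Submodule.map (conjE α m).toLinearMap
        (skewCommSubmodule (BIdx α m) (calS α m lam)) = Msub α m := by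
  ext Y
  simp only [Submodule.mem_map]
  constructor
  · rintro ⟨X, ⟨hT, hC⟩, rfl⟩
    have hYJ : (calQ α m * X * calP α m) * calJ α m lam
        = calJ α m lam * (calQ α m * X * calP α m) := by
      rw [calJ_as_conj, mul_conjQ, mul_conjQ, hC]
    constructor
    · -- commutes with calN
      rw [calJ_eq, mul_add, add_mul] at hYJ
      have h1 : (calQ α m * X * calP α m) * (lam • 1) = lam • (calQ α m * X * calP α m) := by
        rw [Matrix.mul_smul, Matrix.mul_one]
      have h2 : (lam • 1) * (calQ α m * X * calP α m) = lam • (calQ α m * X * calP α m) := by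
        rw [Matrix.smul_mul, Matrix.one_mul]
      rw [h1, h2] at hYJ
      exact add_left_cancel hYJ
    · -- skew condition
      show ((conjE α m) X)ᵀ = _
      have hL : ((calQ α m * X * calP α m))ᵀ = -(calP α m * X * calQ α m) := by
        rw [Matrix.transpose_mul, Matrix.transpose_mul, calP_transpose, calQ_transpose, hT]
        simp only [Matrix.neg_mul, Matrix.mul_neg, Matrix.mul_assoc]
      have hR : bigF α m * (calQ α m * X * calP α m) * bigF α m
          = calP α m * X * calQ α m := by
        have h : bigF α m * (calQ α m * X * calP α m) * bigF α m
            = (bigF α m * calQ α m) * X * (calP α m * bigF α m) := by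
          simp only [Matrix.mul_assoc]
        rw [h, bigF_mul_calQ, calP_mul_bigF]
        simp only [Matrix.smul_mul, Matrix.mul_smul, smul_smul]
        simp [Complex.I_mul_I]
      show ((calQ α m * X * calP α m))ᵀ = -(bigF α m * (calQ α m * X * calP α m) * bigF α m)
      rw [hL, hR]
  · rintro ⟨h1, h2⟩
    refine ⟨calP α m * Y * calQ α m, ⟨?_, ?_⟩, ?_⟩
    · -- skew
      have hL : (calP α m * Y * calQ α m)ᵀ = calQ α m * Yᵀ * calP α m := by
        rw [Matrix.transpose_mul, Matrix.transpose_mul, calP_transpose, calQ_transpose,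
          Matrix.mul_assoc]
      rw [hL, h2]
      have h : calQ α m * -(bigF α m * Y * bigF α m) * calP α m
          = -((calQ α m * bigF α m) * Y * (bigF α m * calP α m)) := by
        rw [Matrix.mul_neg, Matrix.neg_mul]
        simp only [Matrix.mul_assoc]
      rw [h, calQ_mul_bigF, bigF_mul_calP]
      simp only [Matrix.smul_mul, Matrix.mul_smul, smul_smul]
      simp [Complex.I_mul_I]
    · -- commutes with S
      have hYJ : Y * calJ α m lam = calJ α m lam * Y := by
        rw [calJ_eq, mul_add, add_mul, h1, Matrix.mul_smul, Matrix.smul_mul, Matrix.mul_one,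
          Matrix.one_mul]
      rw [calS_eq, ← Matrix.mul_assoc]
      rw [show calP α m * Y * calQ α m * (calP α m * calJ α m lam) * calQ α m
          = calP α m * (Y * ((calQ α m * calP α m) * calJ α m lam)) * calQ α m from by
        simp only [Matrix.mul_assoc]]
      rw [show calP α m * calJ α m lam * calQ α m * (calP α m * Y * calQ α m)
          = calP α m * (calJ α m lam * ((calQ α m * calP α m) * Y)) * calQ α m from by
        simp only [Matrix.mul_assoc]]
      rw [calQ_mul_calP, Matrix.one_mul, Matrix.one_mul, hYJ]
    · show calQ α m * (calP α m * Y * calQ α m) * calP α m = Y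
      rw [show calQ α m * (calP α m * Y * calQ α m) * calP α m
          = (calQ α m * calP α m) * Y * (calQ α m * calP α m) from by simp only [Matrix.mul_assoc]]
      rw [calQ_mul_calP, Matrix.one_mul, Matrix.mul_one]

lemma finrank_skewComm_eq_Msub :
    Module.finrank ℂ (skewCommSubmodule (BIdx α m) (calS α m lam))
      = Module.finrank ℂ (Msub α m) := by
  rw [← map_skewComm α m lam]
  exact LinearEquiv.finrank_eq
    ((conjE α m).submoduleMap (skewCommSubmodule (BIdx α m) (calS α m lam)))

end reduction

def fpred {n : ℕ} (j : Fin n) : Fin n := ⟨(j:ℕ)-1, Nat.lt_of_le_of_lt (Nat.sub_le _ _) j.isLt⟩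

lemma fpred_val {n : ℕ} (j : Fin n) : ((fpred j : Fin n):ℕ) = (j:ℕ) - 1 := rfl

section entries

variable {N : ℕ} (α m : Fin N → ℕ)

lemma calN_apply_eq (s : Fin N) (u v : Fin (α s) × Fin (m s)) :
    calN α m ⟨s, u⟩ ⟨s, v⟩ =
      if u.2 = v.2 then (if (v.1:ℕ) = (u.1:ℕ) then 0 else if (v.1:ℕ) = (u.1:ℕ)+1 then 1 else 0)
      else 0 := by
  rw [calN, blockDiagonal'_apply_eq, blockDiagonal_apply]
  rfl

lemma calN_apply_ne {t s : Fin N} (h : t ≠ s) (u : Fin (α t) × Fin (m t))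
    (v : Fin (α s) × Fin (m s)) : calN α m ⟨t, u⟩ ⟨s, v⟩ = 0 := by
  rw [calN]
  exact blockDiagonal'_apply_ne (fun r => blockDiagonal fun _ : Fin (m r) => Jmat (α r) 0) u v h

lemma bigF_apply_eq (s : Fin N) (u v : Fin (α s) × Fin (m s)) :
    bigF α m ⟨s, u⟩ ⟨s, v⟩ =
      if (u.1:ℕ) + (v.1:ℕ) + 1 = α s ∧ u.2 = v.2 then 1 else 0 := by
  rw [bigF, blockDiagonal'_apply_eq]
  rfl

lemma bigF_apply_ne {t s : Fin N} (h : t ≠ s) (u : Fin (α t) × Fin (m t))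
    (v : Fin (α s) × Fin (m s)) : bigF α m ⟨t, u⟩ ⟨s, v⟩ = 0 := by
  rw [bigF]
  exact blockDiagonal'_apply_ne (fun r => revE (α r) (m r)) u v h

lemma mul_calN_apply (Y : Matrix (BIdx α m) (BIdx α m) ℂ) (r s : Fin N) (i : Fin (α r))
    (j : Fin (α s)) (a : Fin (m r)) (b : Fin (m s)) :
    (Y * calN α m) ⟨r,(i,a)⟩ ⟨s,(j,b)⟩ =
      if 0 < (j:ℕ) then Y ⟨r,(i,a)⟩ ⟨s,(fpred j,b)⟩ else 0 := by
  rw [mul_apply]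
  by_cases hj : 0 < (j:ℕ)
  · rw [if_pos hj]
    rw [Fintype.sum_eq_single (⟨s,(fpred j,b)⟩ : BIdx α m)]
    · rw [calN_apply_eq]
      dsimp only
      rw [if_pos rfl, if_neg (show ¬((j:ℕ) = ((fpred j : Fin (α s)):ℕ)) by rw [fpred_val]; omega),
        if_pos (show (j:ℕ) = ((fpred j : Fin (α s)):ℕ) + 1 by rw [fpred_val]; omega), mul_one]
    · rintro ⟨t,⟨j',b'⟩⟩ hne
      rcases eq_or_ne t s with ht | ht
      · subst ht
        rw [calN_apply_eq]
        dsimp only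
        by_cases hb : b' = b
        · by_cases h1 : (j:ℕ) = (j':ℕ)
          · rw [if_pos hb, if_pos h1, mul_zero]
          · by_cases h2 : (j:ℕ) = (j':ℕ)+1
            · exfalso
              apply hne
              have hv : j' = fpred j := Fin.ext (by rw [fpred_val]; omega)
              rw [hv, hb]
            · rw [if_pos hb, if_neg h1, if_neg h2, mul_zero]
        · rw [if_neg hb, mul_zero]
      · rw [calN_apply_ne α m ht, mul_zero]
  · rw [if_neg hj]
    apply Finset.sum_eq_zero
    rintro ⟨t,⟨j',b'⟩⟩ -
    rcases eq_or_ne t s with ht | ht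
    · subst ht
      rw [calN_apply_eq]
      dsimp only
      by_cases hb : b' = b
      · by_cases h1 : (j:ℕ) = (j':ℕ)
        · rw [if_pos hb, if_pos h1, mul_zero]
        · rw [if_pos hb, if_neg h1, if_neg (by omega), mul_zero]
      · rw [if_neg hb, mul_zero]
    · rw [calN_apply_ne α m ht, mul_zero]

lemma calN_mul_apply (Y : Matrix (BIdx α m) (BIdx α m) ℂ) (r s : Fin N) (i : Fin (α r))
    (j : Fin (α s)) (a : Fin (m r)) (b : Fin (m s)) :
    (calN α m * Y) ⟨r,(i,a)⟩ ⟨s,(j,b)⟩ =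
      if hi : (i:ℕ)+1 < α r then Y ⟨r,(⟨(i:ℕ)+1, hi⟩,a)⟩ ⟨s,(j,b)⟩ else 0 := by
  rw [mul_apply]
  by_cases hi : (i:ℕ)+1 < α r
  · rw [dif_pos hi]
    rw [Fintype.sum_eq_single (⟨r,(⟨(i:ℕ)+1, hi⟩,a)⟩ : BIdx α m)]
    · rw [calN_apply_eq]
      dsimp only
      rw [if_pos rfl, if_neg (by omega), if_pos rfl, one_mul]
    · rintro ⟨t,⟨i',a'⟩⟩ hne
      rcases eq_or_ne r t with ht | ht
      · subst ht
        rw [calN_apply_eq]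
        dsimp only
        by_cases ha : a = a'
        · by_cases h1 : (i':ℕ) = (i:ℕ)
          · rw [if_pos ha, if_pos h1, zero_mul]
          · by_cases h2 : (i':ℕ) = (i:ℕ)+1
            · exfalso
              apply hne
              have hv : i' = ⟨(i:ℕ)+1, hi⟩ := Fin.ext h2
              rw [hv, ha]
            · rw [if_pos ha, if_neg h1, if_neg h2, zero_mul]
        · rw [if_neg ha, zero_mul]
      · rw [calN_apply_ne α m ht, zero_mul]
  · rw [dif_neg hi]
    apply Finset.sum_eq_zero
    rintro ⟨t,⟨i',a'⟩⟩ -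
    rcases eq_or_ne r t with ht | ht
    · subst ht
      rw [calN_apply_eq]
      dsimp only
      by_cases ha : a = a'
      · by_cases h1 : (i':ℕ) = (i:ℕ)
        · rw [if_pos ha, if_pos h1, zero_mul]
        · rw [if_pos ha, if_neg h1, if_neg (by omega), zero_mul]
      · rw [if_neg ha, zero_mul]
    · rw [calN_apply_ne α m ht, zero_mul]

lemma bigF_mul_apply (Y : Matrix (BIdx α m) (BIdx α m) ℂ) (r : Fin N) (i : Fin (α r))
    (a : Fin (m r)) (y : BIdx α m) :
    (bigF α m * Y) ⟨r,(i,a)⟩ y = Y ⟨r,(i.rev,a)⟩ y := by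
  rw [mul_apply]
  rw [Fintype.sum_eq_single (⟨r,(i.rev,a)⟩ : BIdx α m)]
  · rw [bigF_apply_eq]
    dsimp only
    have hval := Fin.val_rev i
    have hlt := i.isLt
    rw [if_pos ⟨by omega, rfl⟩, one_mul]
  · rintro ⟨t,⟨i',a'⟩⟩ hne
    rcases eq_or_ne r t with ht | ht
    · subst ht
      rw [bigF_apply_eq]
      dsimp only
      by_cases hc : (i:ℕ) + (i':ℕ) + 1 = α r ∧ a = a'
      · exfalso
        apply hne
        have hval := Fin.val_rev i
        have hlt := i.isLt
        have hv : i' = i.rev := Fin.ext (by omega)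
        rw [hv, hc.2]
      · rw [if_neg hc, zero_mul]
    · rw [bigF_apply_ne α m ht, zero_mul]

lemma mul_bigF_apply (Y : Matrix (BIdx α m) (BIdx α m) ℂ) (s : Fin N) (j : Fin (α s))
    (b : Fin (m s)) (x : BIdx α m) :
    (Y * bigF α m) x ⟨s,(j,b)⟩ = Y x ⟨s,(j.rev,b)⟩ := by
  rw [mul_apply]
  rw [Fintype.sum_eq_single (⟨s,(j.rev,b)⟩ : BIdx α m)]
  · rw [bigF_apply_eq]
    dsimp only
    have hval := Fin.val_rev j
    have hlt := j.isLt
    rw [if_pos ⟨by omega, rfl⟩, mul_one]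
  · rintro ⟨t,⟨j',b'⟩⟩ hne
    rcases eq_or_ne t s with ht | ht
    · subst ht
      rw [bigF_apply_eq]
      dsimp only
      by_cases hc : (j':ℕ) + (j:ℕ) + 1 = α t ∧ b' = b
      · exfalso
        apply hne
        have hval := Fin.val_rev j
        have hlt := j.isLt
        have h1 := hc.1
        have hv : j' = j.rev := Fin.ext (by omega)
        rw [hv, hc.2]
      · rw [if_neg hc, mul_zero]
    · rw [bigF_apply_ne α m ht, mul_zero]

/-- The entrywise form of the commutation relation. -/
lemma comm_entry {Y : Matrix (BIdx α m) (BIdx α m) ℂ} (h : Y * calN α m = calN α m * Y)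
    (r s : Fin N) (i : Fin (α r)) (j : Fin (α s)) (a : Fin (m r)) (b : Fin (m s)) :
    (if 0 < (j:ℕ) then Y ⟨r,(i,a)⟩ ⟨s,(fpred j,b)⟩ else 0) =
    (if hi : (i:ℕ)+1 < α r then Y ⟨r,(⟨(i:ℕ)+1, hi⟩,a)⟩ ⟨s,(j,b)⟩ else 0) := by
  rw [← mul_calN_apply, ← calN_mul_apply, h]

/-- The entrywise form of the twisted-skew relation. -/
lemma skew_entry {Y : Matrix (BIdx α m) (BIdx α m) ℂ} (h : Yᵀ = -(bigF α m * Y * bigF α m))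
    (r s : Fin N) (i : Fin (α r)) (j : Fin (α s)) (a : Fin (m r)) (b : Fin (m s)) :
    Y ⟨s,(j,b)⟩ ⟨r,(i,a)⟩ = -(Y ⟨r,(i.rev,a)⟩ ⟨s,(j.rev,b)⟩) := by
  have h2 := congrFun (congrFun h ⟨r,(i,a)⟩) ⟨s,(j,b)⟩
  rw [transpose_apply] at h2
  rw [h2]
  show -((bigF α m * Y * bigF α m) ⟨r,(i,a)⟩ ⟨s,(j,b)⟩) = _
  rw [mul_bigF_apply, bigF_mul_apply]

end entries

section structure_lemma

variable {N : ℕ} {α m : Fin N → ℕ}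

/-- Offset of the `(r,s)` block. -/
def off (α : Fin N → ℕ) (r s : Fin N) : ℕ := α s - min (α r) (α s)

/-- Structure theorem for matrices commuting with the nilpotent `calN`. -/
lemma struct {Y : Matrix (BIdx α m) (BIdx α m) ℂ} (hcomm : Y * calN α m = calN α m * Y)
    (r s : Fin N) (i : Fin (α r)) (j : Fin (α s)) (a : Fin (m r)) (b : Fin (m s)) :
    Y ⟨r,(i,a)⟩ ⟨s,(j,b)⟩ =
      if (i:ℕ) + off α r s ≤ (j:ℕ) then
        Y ⟨r,(⟨0, i.pos⟩,a)⟩ ⟨s,(⟨(j:ℕ)-(i:ℕ), Nat.lt_of_le_of_lt (Nat.sub_le _ _) j.isLt⟩,b)⟩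
      else 0 := by
  set f : ℕ → ℕ → ℂ := fun ii jj =>
    if h : ii < α r ∧ jj < α s then Y ⟨r,(⟨ii,h.1⟩,a)⟩ ⟨s,(⟨jj,h.2⟩,b)⟩ else 0 with hf
  have hYf : ∀ (ii jj : ℕ) (hii : ii < α r) (hjj : jj < α s),
      Y ⟨r,(⟨ii,hii⟩,a)⟩ ⟨s,(⟨jj,hjj⟩,b)⟩ = f ii jj := by
    intro ii jj hii hjj
    rw [hf]
    exact (dif_pos (show ii < α r ∧ jj < α s from ⟨hii,hjj⟩)
      (t := fun h => Y ⟨r,(⟨ii,h.1⟩,a)⟩ ⟨s,(⟨jj,h.2⟩,b)⟩) (e := fun _ => 0)).symm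
  -- step relation
  have fstep : ∀ (ii jj : ℕ), ii + 1 < α r → jj + 1 < α s → f (ii+1) (jj+1) = f ii jj := by
    intro ii jj h1 h2
    have hc := comm_entry α m hcomm r s (⟨ii, by omega⟩ : Fin (α r)) (⟨jj+1, h2⟩ : Fin (α s)) a b
    rw [if_pos (show 0 < ((⟨jj+1, h2⟩ : Fin (α s)):ℕ) from Nat.succ_pos jj),
      dif_pos (show ((⟨ii, by omega⟩ : Fin (α r)):ℕ)+1 < α r from h1)] at hc
    have e1 : (fpred (⟨jj+1, h2⟩ : Fin (α s))) = ⟨jj, by omega⟩ := Fin.ext rfl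
    rw [e1] at hc
    rw [← hYf (ii+1) (jj+1) (by omega) (by omega), ← hYf ii jj (by omega) (by omega)]
    exact hc.symm
  -- first column
  have fcol : ∀ (ii : ℕ), ii + 1 < α r → 0 < α s → f (ii+1) 0 = 0 := by
    intro ii h1 h0
    have hc := comm_entry α m hcomm r s (⟨ii, by omega⟩ : Fin (α r)) (⟨0, h0⟩ : Fin (α s)) a b
    rw [if_neg (show ¬ (0 < ((⟨0, h0⟩ : Fin (α s)):ℕ)) from by show ¬ ((0:ℕ) < 0); omega),
      dif_pos (show ((⟨ii, by omega⟩ : Fin (α r)):ℕ)+1 < α r from h1)] at hc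
    rw [← hYf (ii+1) 0 (by omega) h0]
    exact hc.symm
  -- last row
  have frow : ∀ (jj : ℕ), jj + 1 < α s → 0 < α r → f (α r - 1) jj = 0 := by
    intro jj h2 h0
    have hc := comm_entry α m hcomm r s (⟨α r - 1, by omega⟩ : Fin (α r)) (⟨jj+1, h2⟩ : Fin (α s)) a b
    rw [if_pos (show 0 < ((⟨jj+1, h2⟩ : Fin (α s)):ℕ) from Nat.succ_pos jj),
      dif_neg (show ¬ (((⟨α r - 1, by omega⟩ : Fin (α r)):ℕ)+1 < α r) from by show ¬ ((α r - 1)+1 < α r); omega)] at hc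
    have e1 : (fpred (⟨jj+1, h2⟩ : Fin (α s))) = ⟨jj, by omega⟩ := Fin.ext rfl
    rw [e1] at hc
    rw [← hYf (α r - 1) jj (by omega) (by omega)]
    exact hc
  -- diagonal constancy
  have fdiag : ∀ (t ii jj : ℕ), ii = t → ii ≤ jj → jj < α s → ii < α r →
      f ii jj = f 0 (jj - ii) := by
    intro t
    induction t with
    | zero =>
      intro ii jj h0 _ _ _
      subst h0
      rw [Nat.sub_zero]
    | succ n ih =>
      intro ii jj h0 hle hjs hir
      calc f ii jj = f ((ii-1)+1) ((jj-1)+1) := by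
            rw [show (ii-1)+1 = ii by omega, show (jj-1)+1 = jj by omega]
        _ = f (ii-1) (jj-1) := fstep _ _ (by omega) (by omega)
        _ = f 0 ((jj-1) - (ii-1)) := ih _ _ (by omega) (by omega) (by omega) (by omega)
        _ = f 0 (jj - ii) := by rw [show (jj-1)-(ii-1) = jj - ii by omega]
  -- below-diagonal vanishing
  have fzer : ∀ (t ii jj : ℕ), jj = t → jj < ii → ii < α r → jj < α s → f ii jj = 0 := by
    intro t
    induction t with
    | zero =>
      intro ii jj h0 hlt hir hjs
      subst h0
      calc f ii 0 = f ((ii-1)+1) 0 := by rw [show (ii-1)+1 = ii by omega]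
        _ = 0 := fcol _ (by omega) hjs
    | succ n ih =>
      intro ii jj h0 hlt hir hjs
      calc f ii jj = f ((ii-1)+1) ((jj-1)+1) := by
            rw [show (ii-1)+1 = ii by omega, show (jj-1)+1 = jj by omega]
        _ = f (ii-1) (jj-1) := fstep _ _ (by omega) (by omega)
        _ = 0 := ih _ _ (by omega) (by omega) (by omega) (by omega)
  -- small-diagonal vanishing (strictly inside the offset)
  have fzer2 : ∀ (dd : ℕ), dd < off α r s → 0 < α r → f 0 dd = 0 := by
    intro dd hdd h0r
    have hoff : off α r s = α s - min (α r) (α s) := rfl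
    have hmin : min (α r) (α s) = α r := by
      rcases Nat.le_total (α r) (α s) with h | h
      · exact Nat.min_eq_left h
      · exfalso
        rw [hoff, Nat.min_eq_right h] at hdd
        omega
    have hlt : α r < α s := by rw [hoff, hmin] at hdd; omega
    have h1 : f 0 dd = f (α r - 1) (dd + (α r - 1)) := by
      have := fdiag (α r - 1) (α r - 1) (dd + (α r - 1)) rfl (by omega) (by rw [hoff, hmin] at hdd; omega) (by omega)
      rw [this, show dd + (α r - 1) - (α r - 1) = dd by omega]
    rw [h1]
    exact frow _ (by rw [hoff, hmin] at hdd; omega) h0r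
  -- assembly
  by_cases hc : (i:ℕ) + off α r s ≤ (j:ℕ)
  · rw [if_pos hc]
    calc Y ⟨r,(i,a)⟩ ⟨s,(j,b)⟩ = f (i:ℕ) (j:ℕ) := hYf (i:ℕ) (j:ℕ) i.isLt j.isLt
      _ = f 0 ((j:ℕ) - (i:ℕ)) := fdiag (i:ℕ) (i:ℕ) (j:ℕ) rfl (by omega) j.isLt i.isLt
      _ = _ := (hYf 0 ((j:ℕ)-(i:ℕ)) i.pos (Nat.lt_of_le_of_lt (Nat.sub_le _ _) j.isLt)).symm
  · rw [if_neg hc]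
    rcases Nat.lt_or_ge (j:ℕ) (i:ℕ) with hlt | hge
    · calc Y ⟨r,(i,a)⟩ ⟨s,(j,b)⟩ = f (i:ℕ) (j:ℕ) := hYf (i:ℕ) (j:ℕ) i.isLt j.isLt
        _ = 0 := fzer (j:ℕ) (i:ℕ) (j:ℕ) rfl hlt i.isLt j.isLt
    · calc Y ⟨r,(i,a)⟩ ⟨s,(j,b)⟩ = f (i:ℕ) (j:ℕ) := hYf (i:ℕ) (j:ℕ) i.isLt j.isLt
        _ = f 0 ((j:ℕ) - (i:ℕ)) := fdiag (i:ℕ) (i:ℕ) (j:ℕ) rfl hge j.isLt i.isLt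
        _ = 0 := fzer2 _ (by omega) i.pos

end structure_lemma

section params

variable {N : ℕ} (α m : Fin N → ℕ)

abbrev LowT (k : ℕ) := {p : Fin k × Fin k // (p.2 : ℕ) < (p.1 : ℕ)}

abbrev Wsp (α m : Fin N → ℕ) : Type :=
  (∀ r : Fin N, Fin (α r) → LowT (m r) → ℂ) ×
  (∀ p : {q : Fin N × Fin N // q.1 < q.2}, Fin (α p.1.2) → Fin (m p.1.1) → Fin (m p.1.2) → ℂ)

def coefC (w : Wsp α m) (r s : Fin N) (k : ℕ) (a : Fin (m r)) (b : Fin (m s)) : ℂ :=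
  if hrs : r < s then
    (if hk : k < α s then w.2 ⟨(r,s),hrs⟩ ⟨k,hk⟩ a b else 0)
  else if hsr : s < r then
    (if hk : k < α r then -(w.2 ⟨(s,r),hsr⟩ ⟨k,hk⟩ b a) else 0)
  else
    (if hk : k < α r then
      (if hab : (b:ℕ) < (a:ℕ) then
        w.1 r ⟨k,hk⟩ ⟨(a, ⟨(b:ℕ), Nat.lt_trans hab a.isLt⟩), hab⟩
      else if hba : (a:ℕ) < (b:ℕ) then
        -(w.1 r ⟨k,hk⟩ ⟨(⟨(b:ℕ), lt_of_lt_of_eq b.isLt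
            (congrArg m (le_antisymm (not_lt.1 hsr) (not_lt.1 hrs))).symm⟩, a), hba⟩)
      else 0)
    else 0)

lemma coefC_skew (w : Wsp α m) (r s : Fin N) (k : ℕ) (a : Fin (m r)) (b : Fin (m s)) :
    coefC α m w s r k b a = -(coefC α m w r s k a b) := by
  rcases lt_trichotomy r s with h | h | h
  · rw [coefC, coefC, dif_neg (asymm h), dif_pos h, dif_pos h]
    split_ifs with hk
    · rfl
    · rw [neg_zero]
  · subst h
    rw [coefC, coefC, dif_neg (lt_irrefl r), dif_neg (lt_irrefl r), dif_neg (lt_irrefl r),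
      dif_neg (lt_irrefl r)]
    by_cases hk : k < α r
    · rw [dif_pos hk, dif_pos hk]
      rcases lt_trichotomy (a:ℕ) (b:ℕ) with hab | hab | hab
      · rw [dif_pos hab, dif_neg (show ¬((b:ℕ) < (a:ℕ)) from by omega), dif_pos hab, neg_neg]
      · rw [dif_neg (show ¬((a:ℕ) < (b:ℕ)) from by omega),
          dif_neg (show ¬((b:ℕ) < (a:ℕ)) from by omega),
          dif_neg (show ¬((b:ℕ) < (a:ℕ)) from by omega),
          dif_neg (show ¬((a:ℕ) < (b:ℕ)) from by omega), neg_zero]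
      · rw [dif_neg (show ¬((a:ℕ) < (b:ℕ)) from by omega), dif_pos hab, dif_pos hab]
    · rw [dif_neg hk, dif_neg hk, neg_zero]
  · rw [coefC, coefC, dif_pos h, dif_neg (asymm h), dif_pos h]
    split_ifs with hk
    · rw [neg_neg]
    · rw [neg_zero]

lemma coefC_big (hαa : StrictAnti α) (w : Wsp α m) (r s : Fin N) (k : ℕ)
    (a : Fin (m r)) (b : Fin (m s)) (hk : min (α r) (α s) ≤ k) :
    coefC α m w r s k a b = 0 := by
  rcases lt_trichotomy r s with h | h | h
  · have hα : α s < α r := hαa h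
    rw [coefC, dif_pos h, dif_neg (by omega)]
  · subst h
    rw [coefC, dif_neg (lt_irrefl r), dif_neg (lt_irrefl r), dif_neg (by omega)]
  · have hα : α r < α s := hαa h
    rw [coefC, dif_neg (asymm h), dif_pos h, dif_neg (by omega)]

def Ymat (w : Wsp α m) : Matrix (BIdx α m) (BIdx α m) ℂ := fun x y =>
  if (x.2.1:ℕ) + off α x.1 y.1 ≤ (y.2.1:ℕ) then
    coefC α m w x.1 y.1 ((y.2.1:ℕ) - (x.2.1:ℕ) - off α x.1 y.1) x.2.2 y.2.2
  else 0

lemma Ymat_apply (w : Wsp α m) (r s : Fin N) (i : Fin (α r)) (j : Fin (α s))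
    (a : Fin (m r)) (b : Fin (m s)) :
    Ymat α m w ⟨r,(i,a)⟩ ⟨s,(j,b)⟩ =
      if (i:ℕ) + off α r s ≤ (j:ℕ) then
        coefC α m w r s ((j:ℕ) - (i:ℕ) - off α r s) a b
      else 0 := rfl

lemma off_facts (r s : Fin N) : off α r s = α s - min (α r) (α s) := rfl

lemma Ymat_mem (hαa : StrictAnti α) (w : Wsp α m) : Ymat α m w ∈ Msub α m := by
  constructor
  · -- commutes with calN
    ext ⟨r,⟨i,a⟩⟩ ⟨s,⟨j,b⟩⟩
    rw [mul_calN_apply, calN_mul_apply]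
    have ho := off_facts α r s
    have h1 : min (α r) (α s) ≤ α r := Nat.min_le_left _ _
    have h2 : min (α r) (α s) ≤ α s := Nat.min_le_right _ _
    have hjs := j.isLt
    have hir := i.isLt
    by_cases hj : 0 < (j:ℕ)
    · rw [if_pos hj]
      by_cases hi : (i:ℕ)+1 < α r
      · rw [dif_pos hi]
        rw [Ymat_apply, Ymat_apply, fpred_val]
        by_cases hcond : (i:ℕ) + off α r s ≤ (j:ℕ) - 1
        · rw [if_pos hcond,
            if_pos (show ((⟨(i:ℕ)+1, hi⟩ : Fin (α r)):ℕ) + off α r s ≤ (j:ℕ) by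
              show (i:ℕ)+1 + off α r s ≤ (j:ℕ); omega)]
          congr 1
          show (j:ℕ) - 1 - (i:ℕ) - off α r s = (j:ℕ) - ((i:ℕ)+1) - off α r s
          omega
        · rw [if_neg hcond,
            if_neg (show ¬ (((⟨(i:ℕ)+1, hi⟩ : Fin (α r)):ℕ) + off α r s ≤ (j:ℕ)) by
              show ¬ ((i:ℕ)+1 + off α r s ≤ (j:ℕ)); omega)]
      · rw [dif_neg hi]
        rw [Ymat_apply, fpred_val]
        rw [if_neg (by omega)]
    · rw [if_neg hj]
      by_cases hi : (i:ℕ)+1 < α r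
      · rw [dif_pos hi, Ymat_apply,
          if_neg (show ¬ (((⟨(i:ℕ)+1, hi⟩ : Fin (α r)):ℕ) + off α r s ≤ (j:ℕ)) by
            show ¬ ((i:ℕ)+1 + off α r s ≤ (j:ℕ)); omega)]
      · rw [dif_neg hi]
  · -- twisted skew
    ext ⟨r,⟨i,a⟩⟩ ⟨s,⟨j,b⟩⟩
    rw [transpose_apply, neg_apply, mul_bigF_apply, bigF_mul_apply]
    rw [Ymat_apply, Ymat_apply]
    have ho1 := off_facts α s r
    have ho2 := off_facts α r s
    have h1 : min (α r) (α s) ≤ α r := Nat.min_le_left _ _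
    have h2 : min (α r) (α s) ≤ α s := Nat.min_le_right _ _
    have h3 : min (α s) (α r) = min (α r) (α s) := Nat.min_comm _ _
    have hjs := j.isLt
    have hir := i.isLt
    have hri := Fin.val_rev i
    have hrj := Fin.val_rev j
    by_cases hcond : (j:ℕ) + off α s r ≤ (i:ℕ)
    · rw [if_pos hcond, if_pos (show ((i.rev:Fin (α r)):ℕ) + off α r s ≤ ((j.rev:Fin (α s)):ℕ) by omega)]
      rw [coefC_skew]
      congr 2
      omega
    · rw [if_neg hcond, if_neg (show ¬ (((i.rev:Fin (α r)):ℕ) + off α r s ≤ ((j.rev:Fin (α s)):ℕ)) by omega)]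
      rw [neg_zero]

end params

section extraction

variable {N : ℕ} (α m : Fin N → ℕ)

def extW (hαa : StrictAnti α) (Y : Matrix (BIdx α m) (BIdx α m) ℂ) : Wsp α m :=
  (fun r k q => Y ⟨r,(⟨0, k.pos⟩, q.1.1)⟩ ⟨r,(k, q.1.2)⟩,
   fun p k a b => Y ⟨p.1.1,(⟨0, Nat.lt_trans k.pos (hαa p.2)⟩, a)⟩ ⟨p.1.2,(k, b)⟩)

lemma off_self (r : Fin N) : off α r r = 0 := by
  rw [off_facts, Nat.min_self, Nat.sub_self]

lemma off_lt (hαa : StrictAnti α) {r s : Fin N} (h : r < s) : off α r s = 0 := by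
  rw [off_facts, Nat.min_eq_right (le_of_lt (hαa h)), Nat.sub_self]

lemma off_gt (hαa : StrictAnti α) {r s : Fin N} (h : s < r) : off α r s = α s - α r := by
  rw [off_facts, Nat.min_eq_left (le_of_lt (hαa h))]

/-- Extraction is a left inverse of `Ymat`. -/
lemma extW_Ymat (hαa : StrictAnti α) (w : Wsp α m) : extW α m hαa (Ymat α m w) = w := by
  refine Prod.ext ?_ ?_
  · funext r k q
    show Ymat α m w ⟨r,(⟨0, k.pos⟩, q.1.1)⟩ ⟨r,(k, q.1.2)⟩ = w.1 r k q
    rw [Ymat_apply, if_pos (show ((⟨0,k.pos⟩ : Fin (α r)):ℕ) + off α r r ≤ (k:ℕ) from by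
      show (0:ℕ) + off α r r ≤ (k:ℕ)
      rw [off_self]
      omega)]
    show coefC α m w r r ((k:ℕ) - 0 - off α r r) q.1.1 q.1.2 = w.1 r k q
    rw [off_self]
    rw [coefC, dif_neg (lt_irrefl r), dif_neg (lt_irrefl r),
      dif_pos (show (k:ℕ) - 0 - 0 < α r from by omega), dif_pos q.2]
    rfl
  · funext p k a b
    show Ymat α m w ⟨p.1.1,(⟨0, _⟩, a)⟩ ⟨p.1.2,(k, b)⟩ = w.2 p k a b
    rw [Ymat_apply, if_pos (show ((⟨0,Nat.lt_trans k.pos (hαa p.2)⟩ : Fin (α p.1.1)):ℕ)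
        + off α p.1.1 p.1.2 ≤ (k:ℕ) from by
      rw [off_lt α hαa p.2]; exact Nat.zero_le _)]
    show coefC α m w p.1.1 p.1.2 ((k:ℕ) - 0 - off α p.1.1 p.1.2) a b = w.2 p k a b
    rw [off_lt α hαa p.2]
    rw [coefC, dif_pos p.2, dif_pos (show (k:ℕ) - 0 - 0 < α p.1.2 from by
      have := k.isLt; omega)]
    rfl

lemma Yentry_congr {N : ℕ} {α m : Fin N → ℕ} (Y : Matrix (BIdx α m) (BIdx α m) ℂ)
    (r s : Fin N) (a : Fin (m r)) (b : Fin (m s)) {i i' : Fin (α r)} {j j' : Fin (α s)}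
    (hi : (i:ℕ) = (i':ℕ)) (hj : (j:ℕ) = (j':ℕ)) :
    Y ⟨r,(i,a)⟩ ⟨s,(j,b)⟩ = Y ⟨r,(i',a)⟩ ⟨s,(j',b)⟩ := by
  rw [show i = i' from Fin.ext hi, show j = j' from Fin.ext hj]

/-- `Ymat` reconstructs any element of `Msub` from its extracted coefficients. -/
lemma Ymat_extW (hαa : StrictAnti α) {Y : Matrix (BIdx α m) (BIdx α m) ℂ}
    (hY : Y ∈ Msub α m) : Ymat α m (extW α m hαa Y) = Y := by
  obtain ⟨hcomm, hskew⟩ := hY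
  have key : ∀ (r s : Fin N) (d : ℕ) (hd : off α r s ≤ d) (hds : d < α s) (h0r : 0 < α r)
      (a : Fin (m r)) (b : Fin (m s)),
      coefC α m (extW α m hαa Y) r s (d - off α r s) a b
        = Y ⟨r,(⟨0,h0r⟩,a)⟩ ⟨s,(⟨d, hds⟩,b)⟩ := by
    intro r s d hd hds h0r a b
    rcases lt_trichotomy r s with h | h | h
    · rw [off_lt α hαa h, Nat.sub_zero]
      rw [coefC, dif_pos h, dif_pos hds]
      rfl
    · subst h
      rw [off_self, Nat.sub_zero]
      have hdr : d < α r := hds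
      rw [coefC, dif_neg (lt_irrefl r), dif_neg (lt_irrefl r), dif_pos hdr]
      have hv1 : (((⟨d,hds⟩ : Fin (α r)).rev):ℕ) = α r - (d+1) := by rw [Fin.val_rev]
      have hv2 : (((⟨0,h0r⟩ : Fin (α r)).rev):ℕ) = α r - 1 := by rw [Fin.val_rev]
      have hrel : ∀ (a' b' : Fin (m r)),
          Y ⟨r,(⟨0,h0r⟩,a')⟩ ⟨r,(⟨d, hds⟩,b')⟩ = -(Y ⟨r,(⟨0,h0r⟩,b')⟩ ⟨r,(⟨d, hds⟩,a')⟩) := by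
        intro a' b'
        rw [skew_entry α m hskew r r (⟨d,hds⟩ : Fin (α r)) (⟨0,h0r⟩ : Fin (α r)) b' a']
        congr 1
        rw [struct hcomm r r ((⟨d,hds⟩ : Fin (α r)).rev) ((⟨0,h0r⟩ : Fin (α r)).rev) b' a',
          if_pos (show (((⟨d,hds⟩ : Fin (α r)).rev):ℕ) + off α r r
              ≤ (((⟨0,h0r⟩ : Fin (α r)).rev):ℕ) from by rw [hv1, hv2, off_self]; omega)]
        refine Yentry_congr Y r r b' a' rfl ?_
        show (((⟨0,h0r⟩ : Fin (α r)).rev):ℕ) - (((⟨d,hds⟩ : Fin (α r)).rev):ℕ) = d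
        rw [hv1, hv2]
        omega
      by_cases hab : (b:ℕ) < (a:ℕ)
      · rw [dif_pos hab]
        rfl
      · rw [dif_neg hab]
        by_cases hba : (a:ℕ) < (b:ℕ)
        · rw [dif_pos hba]
          exact (hrel a b).symm
        · rw [dif_neg hba]
          have hab' : a = b := Fin.ext (by omega)
          subst hab'
          have h2 := hrel a a
          have h3 : (2:ℂ) * Y ⟨r,(⟨0,h0r⟩,a)⟩ ⟨r,(⟨d,hds⟩,a)⟩ = 0 := by
            rw [two_mul]
            nth_rewrite 2 [h2]
            ring
          exact ((mul_eq_zero.mp h3).resolve_left two_ne_zero).symm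
    · -- s < r
      have hαsr : α r < α s := hαa h
      have hoff : off α r s = α s - α r := off_gt α hαa h
      rw [hoff]
      rw [coefC, dif_neg (asymm h), dif_pos h,
        dif_pos (show d - (α s - α r) < α r from by omega)]
      have hv1 : (((⟨d,hds⟩ : Fin (α s)).rev):ℕ) = α s - (d+1) := by rw [Fin.val_rev]
      have hv2 : (((⟨0,h0r⟩ : Fin (α r)).rev):ℕ) = α r - 1 := by rw [Fin.val_rev]
      rw [skew_entry α m hskew s r (⟨d,hds⟩ : Fin (α s)) (⟨0,h0r⟩ : Fin (α r)) b a]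
      congr 1
      rw [struct hcomm s r ((⟨d,hds⟩ : Fin (α s)).rev) ((⟨0,h0r⟩ : Fin (α r)).rev) b a,
        if_pos (show (((⟨d,hds⟩ : Fin (α s)).rev):ℕ) + off α s r
            ≤ (((⟨0,h0r⟩ : Fin (α r)).rev):ℕ) from by
          rw [hv1, hv2, off_lt α hαa h]; omega)]
      refine (Yentry_congr Y s r b a rfl ?_).symm
      show (((⟨0,h0r⟩ : Fin (α r)).rev):ℕ) - (((⟨d,hds⟩ : Fin (α s)).rev):ℕ) = d - (α s - α r)
      rw [hv1, hv2]
      omega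
  -- assemble
  ext ⟨r,⟨i,a⟩⟩ ⟨s,⟨j,b⟩⟩
  rw [Ymat_apply, struct hcomm r s i j a b]
  by_cases hc : (i:ℕ) + off α r s ≤ (j:ℕ)
  · rw [if_pos hc, if_pos hc]
    have hds : (j:ℕ) - (i:ℕ) < α s := Nat.lt_of_le_of_lt (Nat.sub_le _ _) j.isLt
    exact key r s ((j:ℕ) - (i:ℕ)) (by omega) hds i.pos a b
  · rw [if_neg hc, if_neg hc]

end extraction

section linearity

variable {N : ℕ} (α m : Fin N → ℕ)

lemma coefC_add (w w' : Wsp α m) (r s : Fin N) (k : ℕ) (a : Fin (m r)) (b : Fin (m s)) :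
    coefC α m (w + w') r s k a b = coefC α m w r s k a b + coefC α m w' r s k a b := by
  unfold coefC
  split_ifs <;> first | rfl | (simp only [Prod.snd_add, Prod.fst_add, Pi.add_apply]; ring) | ring

lemma coefC_smul (c : ℂ) (w : Wsp α m) (r s : Fin N) (k : ℕ) (a : Fin (m r)) (b : Fin (m s)) :
    coefC α m (c • w) r s k a b = c * coefC α m w r s k a b := by
  unfold coefC
  split_ifs <;>
    first | rfl | (simp only [Prod.smul_snd, Prod.smul_fst, Pi.smul_apply, smul_eq_mul]; ring) | ring

def YmatL : Wsp α m →ₗ[ℂ] Matrix (BIdx α m) (BIdx α m) ℂ where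
  toFun := Ymat α m
  map_add' w w' := by
    funext x y
    show (if c : _ then _ else _) = _
    by_cases hc : (x.2.1:ℕ) + off α x.1 y.1 ≤ (y.2.1:ℕ)
    · show (if (x.2.1:ℕ) + off α x.1 y.1 ≤ (y.2.1:ℕ) then
          coefC α m (w + w') x.1 y.1 _ x.2.2 y.2.2 else 0) = _
      rw [if_pos hc]
      show _ = Ymat α m w x y + Ymat α m w' x y
      rw [show Ymat α m w x y = if (x.2.1:ℕ) + off α x.1 y.1 ≤ (y.2.1:ℕ) then
          coefC α m w x.1 y.1 ((y.2.1:ℕ) - (x.2.1:ℕ) - off α x.1 y.1) x.2.2 y.2.2 else 0 from rfl,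
        show Ymat α m w' x y = if (x.2.1:ℕ) + off α x.1 y.1 ≤ (y.2.1:ℕ) then
          coefC α m w' x.1 y.1 ((y.2.1:ℕ) - (x.2.1:ℕ) - off α x.1 y.1) x.2.2 y.2.2 else 0 from rfl,
        if_pos hc, if_pos hc]
      exact coefC_add α m w w' _ _ _ _ _
    · show (if (x.2.1:ℕ) + off α x.1 y.1 ≤ (y.2.1:ℕ) then
          coefC α m (w + w') x.1 y.1 _ x.2.2 y.2.2 else 0) = _
      rw [if_neg hc]
      show (0:ℂ) = Ymat α m w x y + Ymat α m w' x y
      rw [show Ymat α m w x y = if (x.2.1:ℕ) + off α x.1 y.1 ≤ (y.2.1:ℕ) then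
          coefC α m w x.1 y.1 ((y.2.1:ℕ) - (x.2.1:ℕ) - off α x.1 y.1) x.2.2 y.2.2 else 0 from rfl,
        show Ymat α m w' x y = if (x.2.1:ℕ) + off α x.1 y.1 ≤ (y.2.1:ℕ) then
          coefC α m w' x.1 y.1 ((y.2.1:ℕ) - (x.2.1:ℕ) - off α x.1 y.1) x.2.2 y.2.2 else 0 from rfl,
        if_neg hc, if_neg hc, add_zero]
  map_smul' c w := by
    funext x y
    by_cases hc : (x.2.1:ℕ) + off α x.1 y.1 ≤ (y.2.1:ℕ)
    · show (if (x.2.1:ℕ) + off α x.1 y.1 ≤ (y.2.1:ℕ) then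
          coefC α m (c • w) x.1 y.1 _ x.2.2 y.2.2 else 0) = c • Ymat α m w x y
      rw [if_pos hc,
        show Ymat α m w x y = if (x.2.1:ℕ) + off α x.1 y.1 ≤ (y.2.1:ℕ) then
          coefC α m w x.1 y.1 ((y.2.1:ℕ) - (x.2.1:ℕ) - off α x.1 y.1) x.2.2 y.2.2 else 0 from rfl,
        if_pos hc]
      exact coefC_smul α m c w _ _ _ _ _
    · show (if (x.2.1:ℕ) + off α x.1 y.1 ≤ (y.2.1:ℕ) then
          coefC α m (c • w) x.1 y.1 _ x.2.2 y.2.2 else 0) = c • Ymat α m w x y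
      rw [if_neg hc,
        show Ymat α m w x y = if (x.2.1:ℕ) + off α x.1 y.1 ≤ (y.2.1:ℕ) then
          coefC α m w x.1 y.1 ((y.2.1:ℕ) - (x.2.1:ℕ) - off α x.1 y.1) x.2.2 y.2.2 else 0 from rfl,
        if_neg hc, smul_zero]

def extL (hαa : StrictAnti α) : Matrix (BIdx α m) (BIdx α m) ℂ →ₗ[ℂ] Wsp α m where
  toFun := extW α m hαa
  map_add' X Y := rfl
  map_smul' c X := rfl

noncomputable def MsubEquiv (hαa : StrictAnti α) : (Msub α m) ≃ₗ[ℂ] Wsp α m :=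
  LinearEquiv.ofLinear
    (((extL α m hαa).comp (Msub α m).subtype))
    (LinearMap.codRestrict (Msub α m) (YmatL α m) (fun w => Ymat_mem α m hαa w))
    (LinearMap.ext fun w => extW_Ymat α m hαa w)
    (LinearMap.ext fun Y => Subtype.ext (Ymat_extW α m hαa Y.2))

lemma finrank_Msub (hαa : StrictAnti α) :
    Module.finrank ℂ (Msub α m) = Module.finrank ℂ (Wsp α m) :=
  LinearEquiv.finrank_eq (MsubEquiv α m hαa)

end linearity

section counting

variable {N : ℕ} (α m : Fin N → ℕ)

lemma card_LowT (k : ℕ) : Fintype.card (LowT k) = k * (k - 1) / 2 := by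
  have e : LowT k ≃ Σ a : Fin k, Fin (a:ℕ) :=
    { toFun := fun q => ⟨q.1.1, ⟨(q.1.2:ℕ), q.2⟩⟩
      invFun := fun x => ⟨(x.1, ⟨(x.2:ℕ), Nat.lt_trans x.2.isLt x.1.isLt⟩), x.2.isLt⟩
      left_inv := fun q => rfl
      right_inv := fun x => rfl }
  rw [Fintype.card_congr e, Fintype.card_sigma]
  simp only [Fintype.card_fin]
  rw [Fin.sum_univ_eq_sum_range (fun i => i) k, Finset.sum_range_id]

lemma finrank_fun3 (x y z : ℕ) :
    Module.finrank ℂ (Fin x → Fin y → Fin z → ℂ) = x * (y * z) := by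
  have hz : ∀ _a : Fin y, Module.finrank ℂ (Fin z → ℂ) = z := fun _ => by
    rw [Module.finrank_pi, Fintype.card_fin]
  have hyz : ∀ _i : Fin x, Module.finrank ℂ (Fin y → Fin z → ℂ) = y * z := fun _ => by
    rw [Module.finrank_pi_fintype, Finset.sum_congr rfl (fun a _ => hz a), Finset.sum_const,
      Finset.card_univ, Fintype.card_fin, smul_eq_mul]
  rw [Module.finrank_pi_fintype, Finset.sum_congr rfl (fun i _ => hyz i), Finset.sum_const,
    Finset.card_univ, Fintype.card_fin, smul_eq_mul]

lemma finrank_Wsp :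
    Module.finrank ℂ (Wsp α m) =
      ∑ r : Fin N,
        α r * (m r * (m r - 1) / 2 + m r * ∑ s ∈ Finset.univ.filter (fun s => s < r), m s) := by
  have hA : Module.finrank ℂ (∀ r : Fin N, Fin (α r) → LowT (m r) → ℂ)
      = ∑ r : Fin N, α r * (m r * (m r - 1) / 2) := by
    rw [Module.finrank_pi_fintype]
    apply Finset.sum_congr rfl
    intro r _
    have hL : ∀ _i : Fin (α r), Module.finrank ℂ (LowT (m r) → ℂ) = m r * (m r - 1) / 2 :=
      fun _ => by rw [Module.finrank_pi, card_LowT]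
    rw [Module.finrank_pi_fintype, Finset.sum_congr rfl (fun i _ => hL i), Finset.sum_const,
      Finset.card_univ, Fintype.card_fin, smul_eq_mul]
  have hB : Module.finrank ℂ
      (∀ p : {q : Fin N × Fin N // q.1 < q.2}, Fin (α p.1.2) → Fin (m p.1.1) → Fin (m p.1.2) → ℂ)
      = ∑ r : Fin N, α r * (m r * ∑ s ∈ Finset.univ.filter (fun s => s < r), m s) := by
    rw [Module.finrank_pi_fintype]
    rw [Finset.sum_congr rfl (fun p _ => finrank_fun3 (α p.1.2) (m p.1.1) (m p.1.2))]
    rw [← Finset.sum_subtype (Finset.univ.filter (fun q : Fin N × Fin N => q.1 < q.2))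
      (fun q => by simp) (fun q : Fin N × Fin N => α q.2 * (m q.1 * m q.2))]
    rw [Finset.sum_filter, Fintype.sum_prod_type, Finset.sum_comm]
    apply Finset.sum_congr rfl
    intro r _
    rw [← Finset.sum_filter (fun s => s < r) (fun s : Fin N => α r * (m s * m r))]
    rw [Finset.mul_sum, Finset.mul_sum]
    exact Finset.sum_congr rfl fun s _ => by ring
  rw [Module.finrank_prod, hA, hB, ← Finset.sum_add_distrib]
  apply Finset.sum_congr rfl
  intro r _
  rw [Nat.mul_add]

end counting


/-- For `S = ⊕_{r=1}^N ⊕_{j=1}^{m_r} K_{α_r}(λ)`, the space of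
skew-symmetric matrices commuting with `S` has dimension
`Σ_r α_r (m_r(m_r−1)/2 + m_r Σ_{s<r} m_s)`. -/
theorem stmt4 (N : ℕ) (α m : Fin N → ℕ)
    (hαa : StrictAnti α) (hα1 : ∀ r, 0 < α r) (hm : ∀ r, 0 < m r) (lam : ℂ) :
    Module.finrank ℂ
      (skewCommSubmodule (Σ r : Fin N, Fin (α r) × Fin (m r))
        (Matrix.blockDiagonal' fun r =>
          Matrix.blockDiagonal fun _ : Fin (m r) => Kmat (α r) lam)) =
      ∑ r : Fin N,
        α r * (m r * (m r - 1) / 2 + m r * ∑ s ∈ Finset.univ.filter (fun s => s < r), m s) := by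
  have h1 : (Matrix.blockDiagonal' fun r =>
      Matrix.blockDiagonal fun _ : Fin (m r) => Kmat (α r) lam) = calS α m lam := rfl
  rw [h1, finrank_skewComm_eq_Msub α m lam, finrank_Msub α m hαa, finrank_Wsp α m]
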